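/- A nonnegative linear relation M ⊆ K^n × K^n is maximally nonnegative if and only if dim M = n, if and only if M is nonnegative and self-adjoint. -/

import Mathlib

open Matrix
open scoped ComplexOrder

namespace PHDAE
noncomputable section

/-- A linear relation on `ℂ^n`: a subspace of `ℂ^n × ℂ^n`. -/
abbrev Rel (n : ℕ) := Submodule ℂ ((Fin n → ℂ) × (Fin n → ℂ))

/-- The standard inner product `⟨x,y⟩ = ∑ conj (x i) * y i` on `ℂ^n`
(conjugate-linear in the first argument). -/
noncomputable def ip {n : ℕ} (x y : Fin n → ℂ) : ℂ := star x ⬝ᵥ y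

/-- The adjoint relation `M* = {(x,y) | ⟪x,w⟫ = ⟪y,v⟫ for all (v,w) ∈ M}`. -/
noncomputable def adj {n : ℕ} (M : Rel n) : Rel n where
  carrier := {p | ∀ q ∈ M, ip p.1 q.2 = ip p.2 q.1}
  add_mem' := by
    intro a b ha hb q hq
    simp only [Set.mem_setOf_eq, ip, Prod.fst_add, Prod.snd_add, star_add,
      add_dotProduct] at *
    rw [ha q hq, hb q hq]
  zero_mem' := by
    intro q hq; simp [ip]
  smul_mem' := by
    intro c a ha q hq
    simp only [Set.mem_setOf_eq, ip, Prod.smul_fst, Prod.smul_snd, star_smul,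
      smul_dotProduct] at *
    rw [ha q hq]

/-- `−M = {(x, −y) | (x,y) ∈ M}`. -/
def negRel {n : ℕ} (M : Rel n) : Rel n :=
  M.map (LinearMap.prodMap LinearMap.id (-LinearMap.id))

/-- The inverse relation `M⁻¹ = {(y,x) | (x,y) ∈ M}`. -/
def invRel {n : ℕ} (M : Rel n) : Rel n :=
  M.map (LinearEquiv.prodComm ℂ (Fin n → ℂ) (Fin n → ℂ)).toLinearMap

/-- The product (composition) `D ∘ L = {(x,z) | ∃ y, (x,y) ∈ L ∧ (y,z) ∈ D}`. -/
def comp {n : ℕ} (D L : Rel n) : Rel n where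
  carrier := {p | ∃ y, (p.1, y) ∈ L ∧ (y, p.2) ∈ D}
  add_mem' := by
    rintro a b ⟨y, hy1, hy2⟩ ⟨z, hz1, hz2⟩
    exact ⟨y + z, by simpa using L.add_mem hy1 hz1, by simpa using D.add_mem hy2 hz2⟩
  zero_mem' := ⟨0, by exact L.zero_mem, by exact D.zero_mem⟩
  smul_mem' := by
    rintro c a ⟨y, hy1, hy2⟩
    exact ⟨c • y, by simpa using L.smul_mem c hy1, by simpa using D.smul_mem c hy2⟩

/-- The range representation `ran [F; G] = {(Fz, Gz) | z ∈ ℂ^l}`. -/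
def ranRel {n l : ℕ} (F G : Matrix (Fin n) (Fin l) ℂ) : Rel n :=
  LinearMap.range ((Matrix.mulVecLin F).prod (Matrix.mulVecLin G))

/-- The kernel representation `ker [K, L] = {(x,y) | Kx + Ly = 0}`. -/
def kerRel {n : ℕ} (K L : Matrix (Fin n) (Fin n) ℂ) : Rel n :=
  LinearMap.ker ((Matrix.mulVecLin K).coprod (Matrix.mulVecLin L))

/-- The graph `{(x, Ax) | x ∈ ℂ^n}` of a matrix. -/
def graphRel {n : ℕ} (A : Matrix (Fin n) (Fin n) ℂ) : Rel n :=
  ranRel 1 A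

def domRel {n : ℕ} (M : Rel n) : Submodule ℂ (Fin n → ℂ) :=
  M.map (LinearMap.fst ℂ _ _)

def ranSRel {n : ℕ} (M : Rel n) : Submodule ℂ (Fin n → ℂ) :=
  M.map (LinearMap.snd ℂ _ _)

def kerSRel {n : ℕ} (M : Rel n) : Submodule ℂ (Fin n → ℂ) :=
  M.comap (LinearMap.inl ℂ _ _)

def mulRel {n : ℕ} (M : Rel n) : Submodule ℂ (Fin n → ℂ) :=
  M.comap (LinearMap.inr ℂ _ _)

/-- Orthogonal complement in `ℂ^n` with respect to the standard inner product. -/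
noncomputable def orth {n : ℕ} (S : Submodule ℂ (Fin n → ℂ)) : Submodule ℂ (Fin n → ℂ) where
  carrier := {y | ∀ x ∈ S, ip x y = 0}
  add_mem' := by
    intro a b ha hb x hx
    simp only [Set.mem_setOf_eq, ip, dotProduct_add] at *
    rw [ha x hx, hb x hx, add_zero]
  zero_mem' := by intro x hx; simp [ip]
  smul_mem' := by
    intro c a ha x hx
    simp only [Set.mem_setOf_eq, ip, dotProduct_smul] at *
    rw [ha x hx, smul_zero]

def IsSymmetricRel {n : ℕ} (M : Rel n) : Prop := M ≤ adj M
def IsSelfAdjointRel {n : ℕ} (M : Rel n) : Prop := M = adj M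
def IsSkewSymmetricRel {n : ℕ} (M : Rel n) : Prop := M ≤ negRel (adj M)
def IsSkewAdjointRel {n : ℕ} (M : Rel n) : Prop := M = negRel (adj M)

def IsDissipativeRel {n : ℕ} (M : Rel n) : Prop := ∀ p ∈ M, (ip p.1 p.2).re ≤ 0
def IsNonnegRel {n : ℕ} (M : Rel n) : Prop :=
  IsSymmetricRel M ∧ ∀ p ∈ M, 0 ≤ ip p.1 p.2
def IsMaxDissipativeRel {n : ℕ} (M : Rel n) : Prop :=
  IsDissipativeRel M ∧ ∀ M' : Rel n, IsDissipativeRel M' → M ≤ M' → M = M'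
def IsMaxNonnegRel {n : ℕ} (M : Rel n) : Prop :=
  IsNonnegRel M ∧ ∀ M' : Rel n, IsNonnegRel M' → M ≤ M' → M = M'

/-- `det (s E − A)` as a polynomial in `s`. -/
noncomputable def pencilDet {n : ℕ} (E A : Matrix (Fin n) (Fin n) ℂ) : Polynomial ℂ :=
  ((Polynomial.X : Polynomial ℂ) • E.map Polynomial.C - A.map Polynomial.C).det

/-- A square pencil is regular if `det (sE − A)` is not the zero polynomial. -/
def PencilRegular {n : ℕ} (E A : Matrix (Fin n) (Fin n) ℂ) : Prop :=
  pencilDet E A ≠ 0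

/-- The (generic) rank of the pencil `sE − A` over the field of rational functions. -/
noncomputable def pencilRank {n : ℕ} (E A : Matrix (Fin n) (Fin n) ℂ) : ℕ :=
  (((Polynomial.X : Polynomial ℂ) • E.map Polynomial.C - A.map Polynomial.C).map
    (algebraMap (Polynomial ℂ) (RatFunc ℂ))).rank

/-- `μ` is an eigenvalue of `sE − A` if the rank of `μE − A` drops below the generic rank. -/
noncomputable def IsPencilEigenvalue {n : ℕ} (E A : Matrix (Fin n) (Fin n) ℂ) (μ : ℂ) : Prop :=
  (μ • E - A).rank < pencilRank E A

/-- For a regular pencil, the eigenvalue `μ` is semi-simple iff there is no Jordan chain of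
length two, i.e. no `x ≠ 0` with `(μE − A)x = 0` and `Ex ∈ ran (μE − A)`. -/
def SemiSimpleEig {n : ℕ} (E A : Matrix (Fin n) (Fin n) ℂ) (μ : ℂ) : Prop :=
  ¬ ∃ x y : Fin n → ℂ, x ≠ 0 ∧ (μ • E - A).mulVec x = 0 ∧ (μ • E - A).mulVec y = E.mulVec x

/-- For a regular pencil, all Jordan blocks at the eigenvalue `μ` have size at most two iff
there is no Jordan chain of length three. -/
def JordanBlocksAtMostTwo {n : ℕ} (E A : Matrix (Fin n) (Fin n) ℂ) (μ : ℂ) : Prop :=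
  ¬ ∃ x y z : Fin n → ℂ, x ≠ 0 ∧ (μ • E - A).mulVec x = 0 ∧
    (μ • E - A).mulVec y = E.mulVec x ∧ (μ • E - A).mulVec z = E.mulVec y

/-- A fixed matrix norm (Frobenius norm); the resolvent-growth characterizations are
independent of the choice of matrix norm. -/
noncomputable def mnorm {n : ℕ} (M : Matrix (Fin n) (Fin n) ℂ) : ℝ :=
  Real.sqrt (∑ i, ∑ j, ‖M i j‖ ^ 2)

end
end PHDAE

/-!
The adjoint `M*` is, after identifying `ℂ^n` with `EuclideanSpace ℂ (Fin n)`, the orthogonal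
complement of the rotated relation `{(y, -x) | (x, y) ∈ M}`, so `dim M* + dim M = 2n`. Hence a
symmetric `M ⊆ M*` has `dim M ≤ n`, with equality iff `M = M*`; and a self-adjoint nonnegative `M`
is maximal, since a nonnegative `M' ⊇ M` satisfies `M' ⊆ M'* ⊆ M* = M`.

Conversely, if `dim M < n`, counting `dim (dom M) + dim (mul M) = dim M` shows that the inclusion
`mul M ⊆ (dom M)^⊥` (a consequence of symmetry) is strict. Adjoining `(0, y)` with
`y ∈ (dom M)^⊥ \ mul M` gives a strictly larger nonnegative relation, as `y ⊥ dom M` kills every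
cross term.
-/

open Module

section
variable {K V W : Type*} [DivisionRing K] [AddCommGroup V] [Module K V] [AddCommGroup W]
  [Module K W] [FiniteDimensional K V] [FiniteDimensional K W]

theorem Submodule.finrank_map_fst_add_finrank_comap_inr (p : Submodule K (V × W)) :
    finrank K (p.map (LinearMap.fst K V W)) + finrank K (p.comap (LinearMap.inr K V W)) =
      finrank K p := by
  have rank_nullity := ((LinearMap.fst K V W).domRestrict p).finrank_range_add_finrank_ker
  rw [LinearMap.range_domRestrict] at rank_nullity
  rw [← rank_nullity]
  have eq_inr (x : LinearMap.ker ((LinearMap.fst K V W).domRestrict p)) :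
      LinearMap.inr K V W x.1.1.2 = x.1.1 := Prod.ext x.2.symm rfl
  congr 1
  exact LinearEquiv.finrank_eq
    { toFun := fun y => ⟨⟨(0, y), y.2⟩, rfl⟩
      invFun := fun x => ⟨x.1.1.2, by simp only [Submodule.mem_comap, eq_inr, SetLike.coe_mem]⟩
      map_add' := fun _ _ => by ext <;> simp
      map_smul' := fun _ _ => by ext <;> simp
      left_inv := fun _ => rfl
      right_inv := fun x => Subtype.ext (Subtype.ext (eq_inr x)) }

end

section
variable {𝕜 E F : Type*} [RCLike 𝕜] [NormedAddCommGroup E] [InnerProductSpace 𝕜 E]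
  [NormedAddCommGroup F] [InnerProductSpace 𝕜 F] [FiniteDimensional 𝕜 E] [FiniteDimensional 𝕜 F]

theorem Submodule.finrank_adjoint_add_finrank (g : Submodule 𝕜 (E × F)) :
    finrank 𝕜 g.adjoint + finrank 𝕜 g = finrank 𝕜 E + finrank 𝕜 F := by
  unfold Submodule.adjoint
  rw [LinearEquiv.finrank_map_eq, ← LinearEquiv.finrank_map_eq
      ((LinearEquiv.skewSwap 𝕜 F E).symm.trans (WithLp.linearEquiv 2 𝕜 (F × E)).symm) g,
    add_comm, Submodule.finrank_add_finrank_orthogonal,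
    LinearEquiv.finrank_eq (WithLp.linearEquiv 2 𝕜 (F × E)), finrank_prod, add_comm]

end

namespace PHDAE

open scoped InnerProductSpace

variable {n : ℕ}

theorem star_ip (x y : Fin n → ℂ) : star (ip x y) = ip y x := by
  rw [ip, ip, Matrix.star_dotProduct, star_star]

def toEuclidean (n : ℕ) : (Fin n → ℂ) ≃ₗ[ℂ] EuclideanSpace ℂ (Fin n) :=
  (WithLp.linearEquiv 2 ℂ (Fin n → ℂ)).symm

theorem inner_toEuclidean (x y : Fin n → ℂ) :
    ⟪toEuclidean n x, toEuclidean n y⟫_ℂ = ip x y :=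
  dotProduct_comm _ _

theorem map_orth (S : Submodule ℂ (Fin n → ℂ)) :
    (orth S).map (toEuclidean n).toLinearMap = (S.map (toEuclidean n).toLinearMap)ᗮ := by
  ext z
  obtain ⟨w, rfl⟩ := (toEuclidean n).surjective z
  rw [Submodule.mem_map_equiv, LinearEquiv.symm_apply_apply, Submodule.mem_orthogonal]
  simp only [Submodule.mem_map, forall_exists_index, and_imp, forall_apply_eq_imp_iff₂,
    LinearEquiv.coe_coe, inner_toEuclidean]
  rfl

theorem map_adj (M : Rel n) :
    (adj M).map ((toEuclidean n).prodCongr (toEuclidean n)).toLinearMap =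
      (M.map ((toEuclidean n).prodCongr (toEuclidean n)).toLinearMap).adjoint := by
  ext z
  obtain ⟨p, rfl⟩ := ((toEuclidean n).prodCongr (toEuclidean n)).surjective z
  rw [Submodule.mem_map_equiv, LinearEquiv.symm_apply_apply, Submodule.mem_adjoint_iff]
  simp only [Submodule.mem_map, Prod.exists, forall_exists_index, and_imp, LinearEquiv.coe_coe,
    LinearEquiv.prodCongr_apply, Prod.mk.injEq]
  have swap (q : (Fin n → ℂ) × (Fin n → ℂ)) :
      ⟪toEuclidean n q.2, toEuclidean n p.1⟫_ℂ - ⟪toEuclidean n q.1, toEuclidean n p.2⟫_ℂ = 0 ↔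
        ip p.1 q.2 = ip p.2 q.1 := by
    rw [inner_toEuclidean, inner_toEuclidean, sub_eq_zero, ← star_ip p.1, ← star_ip p.2, star_inj]
  constructor
  · rintro hp _ _ x y hxy rfl rfl
    exact (swap (x, y)).2 (hp _ hxy)
  · exact fun h q hq => (swap q).1 (h _ _ q.1 q.2 hq rfl rfl)

theorem finrank_add_finrank_orth (S : Submodule ℂ (Fin n → ℂ)) :
    finrank ℂ S + finrank ℂ (orth S) = n := by
  rw [← (toEuclidean n).finrank_map_eq S, ← (toEuclidean n).finrank_map_eq (orth S), map_orth,
    Submodule.finrank_add_finrank_orthogonal, finrank_euclideanSpace_fin]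

theorem finrank_adj_add_finrank (M : Rel n) : finrank ℂ (adj M) + finrank ℂ M = 2 * n := by
  rw [← LinearEquiv.finrank_map_eq ((toEuclidean n).prodCongr (toEuclidean n)) (adj M), map_adj,
    ← LinearEquiv.finrank_map_eq ((toEuclidean n).prodCongr (toEuclidean n)) M,
    Submodule.finrank_adjoint_add_finrank, finrank_euclideanSpace_fin, two_mul]

theorem ip_add_smul_right (x y z : Fin n → ℂ) (c : ℂ) :
    ip x (y + c • z) = ip x y + c * ip x z := by
  rw [ip, ip, ip, dotProduct_add, dotProduct_smul, smul_eq_mul]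

theorem ip_add_smul_left (x y z : Fin n → ℂ) (c : ℂ) :
    ip (y + c • z) x = ip y x + star c * ip z x := by
  rw [ip, ip, ip, star_add, star_smul, add_dotProduct, smul_dotProduct, smul_eq_mul]

theorem adj_le_adj {M M' : Rel n} (h : M ≤ M') : adj M' ≤ adj M :=
  fun _ hp q hq => hp q (h hq)

theorem IsSymmetricRel.finrank_le {M : Rel n} (hM : IsSymmetricRel M) : finrank ℂ M ≤ n := by
  have hle := Submodule.finrank_mono hM
  have hsum := finrank_adj_add_finrank M
  omega

theorem IsSymmetricRel.isSelfAdjointRel_iff_finrank_eq {M : Rel n} (hM : IsSymmetricRel M) :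
    IsSelfAdjointRel M ↔ finrank ℂ M = n := by
  have hsum := finrank_adj_add_finrank M
  refine ⟨fun h => ?_, fun h => Submodule.eq_of_le_of_finrank_eq hM (by omega)⟩
  rw [IsSelfAdjointRel] at h
  rw [← h] at hsum
  omega

theorem IsSelfAdjointRel.eq_of_le {M M' : Rel n} (hM : IsSelfAdjointRel M)
    (hM' : IsSymmetricRel M') (h : M ≤ M') : M = M' :=
  le_antisymm h (hM'.trans ((adj_le_adj h).trans_eq hM.symm))

theorem IsSymmetricRel.mulRel_le_orth_domRel {M : Rel n} (hM : IsSymmetricRel M) :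
    mulRel M ≤ orth (domRel M) := by
  rintro y hy _ ⟨q, hq, rfl⟩
  exact (hM hq _ hy).trans (dotProduct_zero _)

theorem IsSymmetricRel.exists_mem_orth_domRel_notMem_mulRel {M : Rel n} (hM : IsSymmetricRel M)
    (hlt : finrank ℂ M < n) : ∃ y ∈ orth (domRel M), y ∉ mulRel M := by
  refine SetLike.exists_of_lt (lt_of_le_of_ne hM.mulRel_le_orth_domRel fun h => ?_)
  have := finrank_add_finrank_orth (domRel M)
  rw [← h, domRel, mulRel, M.finrank_map_fst_add_finrank_comap_inr] at this
  omega

theorem IsNonnegRel.sup_span_zero_prod {M : Rel n} (hM : IsNonnegRel M) {y : Fin n → ℂ}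
    (hy : y ∈ orth (domRel M)) : IsNonnegRel (M ⊔ Submodule.span ℂ {(0, y)}) := by
  have hperp (m) (hm : m ∈ M) : ip m.1 y = 0 := hy _ ⟨m, hm, rfl⟩
  have hmem (p) (hp : p ∈ M ⊔ Submodule.span ℂ {(0, y)}) :
      ∃ m ∈ M, ∃ c : ℂ, p = (m.1, m.2 + c • y) := by
    obtain ⟨m, hm, _, hs, rfl⟩ := Submodule.mem_sup.mp hp
    obtain ⟨c, rfl⟩ := Submodule.mem_span_singleton.mp hs
    exact ⟨m, hm, c, Prod.ext (by simp) (by simp)⟩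
  refine ⟨fun p hp q hq => ?_, fun p hp => ?_⟩
  · obtain ⟨m, hm, c, rfl⟩ := hmem p hp
    obtain ⟨m', hm', c', rfl⟩ := hmem q hq
    change ip m.1 (m'.2 + c' • y) = ip (m.2 + c • y) m'.1
    rw [ip_add_smul_right, ip_add_smul_left, ← star_ip m'.1 y, hperp m hm, hperp m' hm',
      hM.1 hm m' hm']
    simp
  · obtain ⟨m, hm, c, rfl⟩ := hmem p hp
    change 0 ≤ ip m.1 (m.2 + c • y)
    rw [ip_add_smul_right, hperp m hm, mul_zero, add_zero]
    exact hM.2 m hm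

theorem IsMaxNonnegRel.finrank_eq {M : Rel n} (h : IsMaxNonnegRel M) : finrank ℂ M = n := by
  refine le_antisymm h.1.1.finrank_le (not_lt.1 fun hlt => ?_)
  obtain ⟨y, hy, hyM⟩ := h.1.1.exists_mem_orth_domRel_notMem_mulRel hlt
  have hext := h.2 _ (h.1.sup_span_zero_prod hy) le_sup_left
  exact hyM (hext ▸ Submodule.mem_sup_right (Submodule.mem_span_singleton_self _))

end PHDAE

open PHDAE in
/-- a nonnegative relation is maximally nonnegative iff `dim M = n`,
iff it is nonnegative and self-adjoint. -/
theorem stmt_7 {n : ℕ} (M : Rel n) (hM : IsNonnegRel M) :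
    (IsMaxNonnegRel M ↔ Module.finrank ℂ M = n) ∧
    (IsMaxNonnegRel M ↔ IsNonnegRel M ∧ IsSelfAdjointRel M) := by
  have hmax : IsMaxNonnegRel M ↔ IsSelfAdjointRel M :=
    ⟨fun h => hM.1.isSelfAdjointRel_iff_finrank_eq.2 h.finrank_eq,
      fun h => ⟨hM, fun _ hM' => h.eq_of_le hM'.1⟩⟩
  exact ⟨hmax.trans hM.1.isSelfAdjointRel_iff_finrank_eq, hmax.trans (and_iff_right hM).symm⟩
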